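/- Let n ≥ 2 and m ≤ n+1 be positive integers. Then the chromatic number of the exponential graph K_m^{M(M(K_n))} equals m. -/

import Mathlib

/-- A finite graph in the sense of the paper: a symmetric adjacency relation,
loops are allowed. -/
structure SGraph (V : Type) where
  Adj : V → V → Prop
  symm : ∀ {u v}, Adj u v → Adj v u

namespace SGraph

variable {α β : Type}

/-- The complete graph `K_m` on vertex set `Fin m`. -/
def completeG (m : ℕ) : SGraph (Fin m) :=
  ⟨fun i j => i ≠ j, fun h => h.symm⟩

/-- `f` is a graph homomorphism from `G` to `H`. -/
def IsHom (G : SGraph α) (H : SGraph β) (f : α → β) : Prop :=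
  ∀ ⦃u v⦄, G.Adj u v → H.Adj (f u) (f v)

/-- `G` admits a proper coloring with `n` colors. -/
def Colorable (G : SGraph α) (n : ℕ) : Prop :=
  ∃ f : α → Fin n, G.IsHom (completeG n) f

/-- The chromatic number of `G`, as an extended natural number. -/
noncomputable def chromNum (G : SGraph α) : ℕ∞ :=
  sInf ((fun k : ℕ => (k : ℕ∞)) '' {k | G.Colorable k})

/-- The neighborhood of a vertex. -/
def neighborSet (G : SGraph α) (v : α) : Set α := {w | G.Adj v w}

/-- The categorical product `G × H`. -/
def tensor (G : SGraph α) (H : SGraph β) : SGraph (α × β) :=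
  ⟨fun p q => G.Adj p.1 q.1 ∧ H.Adj p.2 q.2, fun h => ⟨G.symm h.1, H.symm h.2⟩⟩

/-- The exponential graph `K_m^G`: vertices are all set maps `V(G) → [m]`,
and `f` is adjacent to `g` iff `f u ≠ g v` for every edge `(u,v)` of `G`
(loops are allowed). -/
def expG (G : SGraph α) (m : ℕ) : SGraph (α → Fin m) :=
  ⟨fun f g => ∀ u v, G.Adj u v → f u ≠ g v,
   fun {f g} h u v huv e => h v u (G.symm huv) e.symm⟩

/-- `G` is connected: nonempty and any two vertices are joined by a walk. -/
def Connected (G : SGraph α) : Prop :=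
  Nonempty α ∧ ∀ u v : α, Relation.ReflTransGen G.Adj u v

/-- Property `P` of the paper: `G` is simple, and for any two disjoint edges
`(v1,w1)` and `(v2,w2)`, if `(v2,v1)` is an edge then `(w2,v1)` or `(w2,w1)`
is an edge. -/
def PropertyP (G : SGraph α) : Prop :=
  (∀ v, ¬ G.Adj v v) ∧
  ∀ ⦃v1 w1 v2 w2 : α⦄, G.Adj v1 w1 → G.Adj v2 w2 →
    v1 ≠ v2 → v1 ≠ w2 → w1 ≠ v2 → w1 ≠ w2 →
    G.Adj v2 v1 → (G.Adj w2 v1 ∨ G.Adj w2 w1)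

/-- Base (unsymmetrized) relation for the Mycielskian:
level-0 copies are adjacent as in `G`, a level-1 vertex is adjacent to the
level-0 copies of the neighbours of its shadow, and the apex `none` is
adjacent to all level-1 vertices. -/
def mycRel (G : SGraph α) : Option (α × Bool) → Option (α × Bool) → Prop
  | some (a, false), some (b, false) => G.Adj a b
  | some (a, true), some (b, false) => G.Adj a b
  | none, some (_, true) => True
  | _, _ => False

/-- The Mycielskian `M(G)`. -/
def myc (G : SGraph α) : SGraph (Option (α × Bool)) :=
  ⟨fun u v => G.mycRel u v ∨ G.mycRel v u, fun h => h.symm⟩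

/-- The double Mycielskian `M(M(K_n))`. -/
def MMK (n : ℕ) : SGraph (Option (Option (Fin n × Bool) × Bool)) :=
  myc (myc (completeG n))

/-- The vertex `(x, i, j)` of `M(M(K_n))`. -/
def vtx {n : ℕ} (x : Fin n) (i j : Bool) : Option (Option (Fin n × Bool) × Bool) :=
  some (some (x, i), j)

/-- The vertex `w_i = (*, i)` of `M(M(K_n))` for `i ∈ {0,1}`. -/
def wv (n : ℕ) (i : Bool) : Option (Option (Fin n × Bool) × Bool) :=
  some (none, i)

/-- The apex vertex `w_2` of `M(M(K_n))`. -/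
def w2 (n : ℕ) : Option (Option (Fin n × Bool) × Bool) := none

end SGraph

/-!
Every map `f : V(M(M(K_n))) → [m]` with `m ≤ n + 1` has a monochromatic edge, because
`M(M(K_n))` needs `n + 2` colors. Color `f` by the color of such an edge, taken from the first
nonempty class in a fixed priority order of edge types. If adjacent `f` and `g` got the same
color, then in most cases some edge of `M(M(K_n))` joins their two monochromatic edges, which
adjacency forbids. In the remaining cases the minimality of `g`'s class makes `g` injective on the
clique `{(x,0,0)}`, so that (as `m ≤ n + 1`) it misses at most one color there; chasing the
colors of `f` and `g` around the graph then produces two distinct missed colors. Conversely the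
constant maps form an `m`-clique.
-/

theorem Function.Injective.eq_of_forall_ne_apply {α β : Type*} [Fintype α] [Fintype β]
    {a : α → β} (ha : Function.Injective a) (hcard : Fintype.card β ≤ Fintype.card α + 1)
    {d₁ d₂ : β} (h₁ : ∀ x, a x ≠ d₁) (h₂ : ∀ x, a x ≠ d₂) : d₁ = d₂ := by
  classical
  have hcompl : (Finset.univ.image a)ᶜ.card ≤ 1 := by
    rw [Finset.card_compl, Finset.card_image_of_injective _ ha, Finset.card_univ]
    omega
  exact Finset.card_le_one.1 hcompl d₁ (by simpa using h₁) d₂ (by simpa using h₂)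

namespace SGraph

variable {α : Type}

theorem Colorable.mono {G : SGraph α} {k l : ℕ} (hkl : k ≤ l) (h : G.Colorable k) :
    G.Colorable l := by
  obtain ⟨f, hf⟩ := h
  exact ⟨fun x => Fin.castLE hkl (f x), fun u v huv e => hf huv (Fin.castLE_injective hkl e)⟩

theorem not_colorable_zero [Nonempty α] {G : SGraph α} : ¬ G.Colorable 0 :=
  fun ⟨f, _⟩ => (f (Classical.arbitrary α)).elim0

theorem not_colorable_completeG {k l : ℕ} (h : l < k) : ¬ (completeG k).Colorable l := by
  rintro ⟨f, hf⟩
  have : Function.Injective f := fun i j e => by_contra fun hij => hf hij e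
  exact h.not_ge (by simpa using Fintype.card_le_of_injective f this)

theorem chromNum_eq_of_colorable {G : SGraph α} {m : ℕ} (h : G.Colorable m)
    (hmin : ∀ k, G.Colorable k → m ≤ k) : G.chromNum = m :=
  le_antisymm (sInf_le ⟨m, h, rfl⟩) <| le_sInf <| by
    rintro _ ⟨k, hk, rfl⟩
    exact Nat.cast_le.2 (hmin k hk)

theorem le_of_expG_colorable {G : SGraph α} {m k : ℕ} (h : (expG G m).Colorable k) : m ≤ k := by
  obtain ⟨f, hf⟩ := h
  have : Function.Injective fun i : Fin m => f fun _ => i :=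
    fun i j e => by_contra fun hij => hf (u := fun _ => i) (v := fun _ => j) (fun _ _ _ => hij) e
  simpa using Fintype.card_le_of_injective _ this

section Mycielskian

variable {G : SGraph α} {x y : α}

theorem myc_adj_zero_zero (h : G.Adj x y) : (myc G).Adj (some (x, false)) (some (y, false)) :=
  Or.inl h

theorem myc_adj_one_zero (h : G.Adj x y) : (myc G).Adj (some (x, true)) (some (y, false)) :=
  Or.inl h

theorem myc_adj_apex (x : α) : (myc G).Adj none (some (x, true)) :=
  Or.inl trivial

theorem Colorable.of_myc {k : ℕ} (h : (myc G).Colorable (k + 1)) : G.Colorable k := by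
  classical
  obtain ⟨f, hf⟩ := h
  -- recolor `x` by its twin `(x, 1)` when `(x, 0)` has the apex color, which is then unused
  let c : α → {i // i ≠ f none} := fun x =>
    if hx : f (some (x, false)) = f none then
      ⟨f (some (x, true)), fun e => hf (myc_adj_apex x) e.symm⟩
    else ⟨f (some (x, false)), hx⟩
  refine ⟨fun x => (finSuccAboveEquiv (f none)).symm (c x), fun x y hxy e => ?_⟩
  replace e := congrArg Subtype.val ((finSuccAboveEquiv (f none)).symm.injective e)
  by_cases hx : f (some (x, false)) = f none <;> by_cases hy : f (some (y, false)) = f none <;>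
    simp only [c, hx, hy, dite_true, dite_false] at e
  · exact hf (myc_adj_zero_zero hxy) (hx.trans hy.symm)
  · exact hf (myc_adj_one_zero hxy) e
  · exact hf (myc_adj_one_zero (G.symm hxy)) e.symm
  · exact hf (myc_adj_zero_zero hxy) e

end Mycielskian

theorem not_colorable_MMK (n : ℕ) : ¬ (MMK n).Colorable (n + 1) := by
  intro h
  cases n with
  | zero => exact not_colorable_zero h.of_myc
  | succ k => exact not_colorable_completeG k.lt_succ_self h.of_myc.of_myc

end SGraph

namespace SGraph.MMK

variable {n m : ℕ}

abbrev Vertex (n : ℕ) : Type := Option (Option (Fin n × Bool) × Bool)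

-- `A x, B x, C x, D x` are the paper's `(x,0,0), (x,1,0), (x,0,1), (x,1,1)`, and `P, Q, R` are
-- `w₀, w₁, w₂`.
abbrev A (x : Fin n) : Vertex n := vtx x false false
abbrev B (x : Fin n) : Vertex n := vtx x true false
abbrev C (x : Fin n) : Vertex n := vtx x false true
abbrev D (x : Fin n) : Vertex n := vtx x true true
abbrev P : Vertex n := wv n false
abbrev Q : Vertex n := wv n true
abbrev R : Vertex n := w2 n

inductive Edge : Vertex n → Vertex n → Prop
  | AA {x y : Fin n} : x ≠ y → Edge (A x) (A y)
  | BA {x y : Fin n} : x ≠ y → Edge (B x) (A y)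
  | PB (x : Fin n) : Edge P (B x)
  | CA {x y : Fin n} : x ≠ y → Edge (C x) (A y)
  | CB {x y : Fin n} : x ≠ y → Edge (C x) (B y)
  | DA {x y : Fin n} : x ≠ y → Edge (D x) (A y)
  | DP (x : Fin n) : Edge (D x) P
  | QB (x : Fin n) : Edge Q (B x)
  | RC (x : Fin n) : Edge R (C x)
  | RD (x : Fin n) : Edge R (D x)
  | RQ : Edge R Q

attribute [grind intro] Edge

theorem Edge.adj {u v : Vertex n} (e : Edge u v) : (MMK n).Adj u v := by
  cases e with
  | AA h => exact myc_adj_zero_zero (myc_adj_zero_zero h)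
  | BA h => exact myc_adj_zero_zero (myc_adj_one_zero h)
  | PB x => exact myc_adj_zero_zero (myc_adj_apex x)
  | CA h => exact myc_adj_one_zero (myc_adj_zero_zero h)
  | CB h => exact myc_adj_one_zero ((myc _).symm (myc_adj_one_zero h.symm))
  | DA h => exact myc_adj_one_zero (myc_adj_one_zero h)
  | DP x => exact myc_adj_one_zero ((myc _).symm (myc_adj_apex x))
  | QB x => exact myc_adj_one_zero (myc_adj_apex x)
  | RC x => exact myc_adj_apex _
  | RD x => exact myc_adj_apex _
  | RQ => exact myc_adj_apex _

theorem edge_of_adj {u v : Vertex n} (h : (MMK n).Adj u v) : Edge u v ∨ Edge v u := by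
  rcases u with _ | ⟨_ | ⟨x, _ | _⟩, _ | _⟩ <;> rcases v with _ | ⟨_ | ⟨y, _ | _⟩, _ | _⟩ <;>
    simp only [MMK, myc, mycRel, completeG, or_false, false_or] at h <;>
    first
    | (left; constructor <;> grind)
    | (right; constructor <;> grind)

def MonoEdge (f : Vertex n → Fin m) : ℕ → Fin m → Prop
  | 0, c => ∃ x y, x ≠ y ∧ f (A x) = c ∧ f (A y) = c
  | 1, c => f P = c ∧ ∃ x, f (B x) = c
  | 2, c => ∃ x y, x ≠ y ∧ f (B x) = c ∧ f (A y) = c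
  | 3, c => f R = c ∧ ((∃ x, f (C x) = c) ∨ (∃ x, f (D x) = c) ∨ f Q = c)
  | 4, c => ∃ x y, x ≠ y ∧ f (C x) = c ∧ f (A y) = c
  | 5, c => ∃ x y, x ≠ y ∧ f (C x) = c ∧ f (B y) = c
  | 6, c => ∃ x y, x ≠ y ∧ f (D x) = c ∧ f (A y) = c
  | 7, c => ∃ x, f (D x) = c ∧ f P = c
  | 8, c => ∃ x, f Q = c ∧ f (B x) = c
  | _, _ => False

variable {f g : Vertex n → Fin m} {c : Fin m}

theorem MonoEdge.lt_nine {k : ℕ} (h : MonoEdge f k c) : k < 9 := by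
  match k, h with
  | 0, _ | 1, _ | 2, _ | 3, _ | 4, _ | 5, _ | 6, _ | 7, _ | 8, _ => omega

theorem isHom_of_forall_not_monoEdge (h : ∀ k c, ¬ MonoEdge f k c) :
    (MMK n).IsHom (completeG m) f := by
  have key : ∀ u v, Edge u v → f u ≠ f v := by
    intro u v e huv
    cases e with
    | AA hxy => exact h 0 _ ⟨_, _, hxy, rfl, huv.symm⟩
    | BA hxy => exact h 2 _ ⟨_, _, hxy, rfl, huv.symm⟩
    | PB x => exact h 1 _ ⟨rfl, x, huv.symm⟩
    | CA hxy => exact h 4 _ ⟨_, _, hxy, rfl, huv.symm⟩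
    | CB hxy => exact h 5 _ ⟨_, _, hxy, rfl, huv.symm⟩
    | DA hxy => exact h 6 _ ⟨_, _, hxy, rfl, huv.symm⟩
    | DP x => exact h 7 _ ⟨x, rfl, huv.symm⟩
    | QB x => exact h 8 _ ⟨x, rfl, huv.symm⟩
    | RC x => exact h 3 _ ⟨rfl, .inl ⟨x, huv.symm⟩⟩
    | RD x => exact h 3 _ ⟨rfl, .inr (.inl ⟨x, huv.symm⟩)⟩
    | RQ => exact h 3 _ ⟨rfl, .inr (.inr huv.symm)⟩
  intro u v huv
  rcases edge_of_adj huv with e | e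
  exacts [key u v e, (key v u e).symm]

theorem exists_monoEdge (hm : m ≤ n + 1) (f : Vertex n → Fin m) : ∃ k c, MonoEdge f k c := by
  by_contra! h
  exact not_colorable_MMK n (Colorable.mono hm ⟨f, isHom_of_forall_not_monoEdge h⟩)

open Classical in
noncomputable def color (f : Vertex n → Fin m) : Fin m :=
  if h : ∃ k c, MonoEdge f k c then (Nat.find_spec h).choose else f R

theorem exists_monoEdge_color (hm : m ≤ n + 1) (f : Vertex n → Fin m) :
    ∃ k, MonoEdge f k (color f) ∧ ∀ j < k, ∀ c, ¬ MonoEdge f j c := by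
  classical
  have h := exists_monoEdge hm f
  refine ⟨Nat.find h, ?_, fun j hj c hc => Nat.find_min h hj ⟨c, hc⟩⟩
  rw [color, dif_pos h]
  exact (Nat.find_spec h).choose_spec

theorem ne_of_edge (hfg : (expG (MMK n) m).Adj f g) {u v : Vertex n} (e : Edge u v) :
    f u ≠ g v ∧ f v ≠ g u :=
  ⟨hfg u v e.adj, hfg v u ((MMK n).symm e.adj)⟩

section FarApart

variable (hm : m ≤ n + 1) (hfg : (expG (MMK n) m).Adj f g) (hg₀ : ∀ c, ¬ MonoEdge g 0 c)
include hm hg₀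

theorem eq_of_forall_A_ne {d₁ d₂ : Fin m} (h₁ : ∀ z, g (A z) ≠ d₁) (h₂ : ∀ z, g (A z) ≠ d₂) :
    d₁ = d₂ :=
  Function.Injective.eq_of_forall_ne_apply
    (fun x y e => by_contra fun hxy => hg₀ _ ⟨x, y, hxy, rfl, e.symm⟩) (by simpa using hm) h₁ h₂

theorem eq_A_of_forall_ne_A {d : Fin m} {z₀ : Fin n} (hc : ∀ z, g (A z) ≠ c) (hd : d ≠ c)
    (h : ∀ z ≠ z₀, g (A z) ≠ d) : d = g (A z₀) :=
  by_contra fun hne => hd <| eq_of_forall_A_ne hm hg₀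
    (fun z => by rcases eq_or_ne z z₀ with rfl | hz; exacts [Ne.symm hne, h z hz]) hc

include hfg

theorem false_of_forall_A_ne_of_forall_B_ne (hg₂ : ∀ c, ¬ MonoEdge g 2 c)
    (hA : ∀ z, g (A z) ≠ c) (hB : ∀ z, g (B z) ≠ c) (hQ : f Q ≠ c) : False := by
  have hBA : ∀ z, g (B z) = g (A z) := fun z =>
    eq_A_of_forall_ne_A hm hg₀ hA (hB z) fun w hw e => hg₂ _ ⟨z, w, hw.symm, rfl, e⟩
  exact hQ <| eq_of_forall_A_ne hm hg₀
    (fun z e => (ne_of_edge hfg (.QB z)).1 (e.symm.trans (hBA z).symm)) hA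

theorem false_of_monoEdge_AA_R (hg₂ : ∀ c, ¬ MonoEdge g 2 c) (hf : MonoEdge f 0 c)
    (hg : MonoEdge g 3 c) : False := by
  obtain ⟨x, y, hxy, hfx, hfy⟩ := hf
  have hE : ∀ {u v}, Edge u v → f u ≠ g v ∧ f v ≠ g u := ne_of_edge hfg
  exact false_of_forall_A_ne_of_forall_B_ne hm hfg hg₀ hg₂ (c := c) (by grind) (by grind)
    (hg.1 ▸ (hE .RQ).2)

theorem false_of_monoEdge_PB_R (hg₂ : ∀ c, ¬ MonoEdge g 2 c) (hf : MonoEdge f 1 c)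
    (hg : MonoEdge g 3 c) : False := by
  obtain ⟨hfP, u, hfu⟩ := hf
  obtain ⟨hgR, -⟩ := hg
  have hE : ∀ {u v}, Edge u v → f u ≠ g v ∧ f v ≠ g u := ne_of_edge hfg
  have hB : ∀ z, g (B z) ≠ c := fun z => hfP ▸ (hE (.PB z)).1.symm
  have hQ : f Q ≠ c := hgR ▸ (hE .RQ).2
  by_cases hAu : g (A u) ≠ c
  · exact false_of_forall_A_ne_of_forall_B_ne hm hfg hg₀ hg₂ (by grind) hB hQ
  push Not at hAu
  -- now `g ∘ A` hits `c`, and the one color it misses is `f (C u)`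
  have hC : ∀ z, g (A z) ≠ f (C u) := by grind
  have hBu : g (B u) = f (C u) := by
    refine eq_of_forall_A_ne hm hg₀ (fun z => ?_) hC
    rcases eq_or_ne z u with rfl | hz
    exacts [hAu ▸ (hB z).symm, fun e => hg₂ _ ⟨u, z, hz.symm, rfl, e⟩]
  have hBA : ∀ z ≠ u, g (B z) = g (A z) := by
    intro z hz
    by_contra hne
    refine (hE (.CB hz.symm)).1 (eq_of_forall_A_ne hm hg₀ hC fun w => ?_)
    rcases eq_or_ne w z with rfl | hw
    exacts [fun e => hne e.symm, fun e => hg₂ _ ⟨z, w, hw.symm, rfl, e⟩]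
  refine (hE (.QB u)).1 (hBu ▸ eq_of_forall_A_ne hm hg₀ (fun z => ?_) hC)
  rcases eq_or_ne z u with rfl | hz
  exacts [hAu ▸ hQ.symm, hBA z hz ▸ (hE (.QB z)).1.symm]

theorem false_of_monoEdge_BA_R (hf : MonoEdge f 2 c) (hg : MonoEdge g 3 c) : False := by
  obtain ⟨u, v, huv, hfu, hfv⟩ := hf
  have hE : ∀ {u v}, Edge u v → f u ≠ g v ∧ f v ≠ g u := ne_of_edge hfg
  have hA : ∀ z, g (A z) ≠ c := by grind
  have hDA : ∀ z, f (D z) = g (A z) := fun z =>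
    eq_A_of_forall_ne_A hm hg₀ hA (hg.1 ▸ (hE (.RD z)).2) fun w hw => (hE (.DA hw.symm)).1.symm
  exact (hfu ▸ (hE (.PB u)).2.symm) <|
    eq_of_forall_A_ne hm hg₀ (fun z e => (hE (.DP z)).1 ((hDA z).trans e)) hA

theorem false_of_monoEdge_CA_DP (hf : MonoEdge f 4 c) (hg : MonoEdge g 7 c) : False := by
  obtain ⟨x, y, hxy, hfx, hfy⟩ := hf
  obtain ⟨-, -, hgP⟩ := hg
  have hE : ∀ {u v}, Edge u v → f u ≠ g v ∧ f v ≠ g u := ne_of_edge hfg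
  have hA : ∀ z, g (A z) ≠ c := by grind
  have hDA : ∀ z, f (D z) = g (A z) := fun z =>
    eq_A_of_forall_ne_A hm hg₀ hA (hgP ▸ (hE (.DP z)).1) fun w hw => (hE (.DA hw.symm)).1.symm
  exact (hfx ▸ (hE (.RC x)).2.symm) <|
    eq_of_forall_A_ne hm hg₀ (fun z e => (hE (.RD z)).2 ((hDA z).trans e)) hA

theorem false_of_monoEdge_DA_QB (hf : MonoEdge f 6 c) (hg : MonoEdge g 8 c) : False := by
  obtain ⟨x, y, hxy, hfx, hfy⟩ := hf
  obtain ⟨-, hgQ, -⟩ := hg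
  have hE : ∀ {u v}, Edge u v → f u ≠ g v ∧ f v ≠ g u := ne_of_edge hfg
  have hA : ∀ z, g (A z) ≠ c := by grind
  have hBA : ∀ z, f (B z) = g (A z) := fun z =>
    eq_A_of_forall_ne_A hm hg₀ hA (hgQ ▸ (hE (.QB z)).2) fun w hw => (hE (.BA hw.symm)).1.symm
  exact (hfx ▸ (hE (.DP x)).1.symm) <|
    eq_of_forall_A_ne hm hg₀ (fun z e => (hE (.PB z)).2 ((hBA z).trans e)) hA

theorem false_of_monoEdge_CB_CB (hf : MonoEdge f 5 c) (hg : MonoEdge g 5 c) : False := by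
  obtain ⟨x, y, hxy, hfx, hfy⟩ := hf
  obtain ⟨x', y', hxy', hgx, hgy⟩ := hg
  have hE : ∀ {u v}, Edge u v → f u ≠ g v ∧ f v ≠ g u := ne_of_edge hfg
  have hA : ∀ z, g (A z) ≠ c := by grind
  have hfA : ∀ z, f (A z) = g (A z) := fun z =>
    eq_A_of_forall_ne_A hm hg₀ hA (by grind) fun w hw => (hE (.AA hw.symm)).1.symm
  obtain rfl : y = x' := by grind
  have hBA : ∀ z ≠ y, f (B z) = g (A z) := fun z hz =>
    eq_A_of_forall_ne_A hm hg₀ hA (hgx ▸ (hE (.CB hz.symm)).2)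
      fun w hw => (hE (.BA hw.symm)).1.symm
  have hQ : g Q = g (A y) :=
    eq_A_of_forall_ne_A hm hg₀ hA (hfy ▸ (hE (.QB y)).2.symm)
      fun z hz => hBA z hz ▸ (hE (.QB z)).2
  have hCA : ∀ z ≠ y, g (C z) = g (A z) := fun z hz =>
    eq_A_of_forall_ne_A hm hg₀ hA (hfy ▸ (hE (.CB hz)).2.symm)
      fun w hw => hfA w ▸ (hE (.CA hw.symm)).2
  refine (hgx ▸ (hE (.RC y)).1) (eq_of_forall_A_ne hm hg₀ (fun z => ?_) hA)
  rcases eq_or_ne z y with rfl | hz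
  exacts [hQ ▸ (hE .RQ).1.symm, hCA z hz ▸ (hE (.RC z)).1.symm]

end FarApart

theorem false_of_monoEdge (hm : m ≤ n + 1) (hfg : (expG (MMK n) m).Adj f g) {i j : ℕ}
    (hij : i ≤ j) (hf : MonoEdge f i c) (hg : MonoEdge g j c)
    (hg' : ∀ k < j, ∀ c, ¬ MonoEdge g k c) : False := by
  have hj := hg.lt_nine
  have hE : ∀ {u v}, Edge u v → f u ≠ g v ∧ f v ≠ g u := ne_of_edge hfg
  interval_cases j <;> interval_cases i
  -- Only in these six pairs of classes can the two monochromatic edges be far apart; in all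
  -- others some edge of `MMK n` joins them.
  all_goals first
    | exact false_of_monoEdge_AA_R hm hfg (hg' 0 (by norm_num)) (hg' 2 (by norm_num)) hf hg
    | exact false_of_monoEdge_PB_R hm hfg (hg' 0 (by norm_num)) (hg' 2 (by norm_num)) hf hg
    | exact false_of_monoEdge_BA_R hm hfg (hg' 0 (by norm_num)) hf hg
    | exact false_of_monoEdge_CA_DP hm hfg (hg' 0 (by norm_num)) hf hg
    | exact false_of_monoEdge_DA_QB hm hfg (hg' 0 (by norm_num)) hf hg
    | exact false_of_monoEdge_CB_CB hm hfg (hg' 0 (by norm_num)) hf hg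
    | (simp only [MonoEdge] at hf hg; grind)

theorem isHom_color (hm : m ≤ n + 1) : (expG (MMK n) m).IsHom (completeG m) color := by
  intro f g hfg hc
  obtain ⟨i, hfi, hf'⟩ := exists_monoEdge_color hm f
  obtain ⟨j, hgj, hg'⟩ := exists_monoEdge_color hm g
  rcases le_total i j with hij | hji
  · exact false_of_monoEdge hm hfg hij hfi (hc ▸ hgj) hg'
  · exact false_of_monoEdge hm ((expG _ _).symm hfg) hji hgj (hc ▸ hfi) hf'

end SGraph.MMK

namespace Graph

theorem chromNum_expG_MMK (n m : ℕ) (hmn : m ≤ n + 1) :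
    (SGraph.expG (SGraph.MMK n) m).chromNum = m :=
  SGraph.chromNum_eq_of_colorable ⟨_, SGraph.MMK.isHom_color hmn⟩
    fun _ => SGraph.le_of_expG_colorable

end Graph
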